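/- Let L be an integral ℓ-monoid, let α be a fuzzy regular expression over a finite alphabet X with associated alphabet Y, and let A = (A, X∪Y, δ^A, a₀, τ^A) be an arbitrary nondeterministic finite automaton recognizing the language ‖α_R‖. Then for all a, b ∈ A, the set {φ*_α(u)⊗δ^A(a,u,b) : u ∈ Y*} has a least upper bound in L, and R_A(a,b) = ⋁_{u∈Y*} φ*_α(u)⊗δ^A(a,u,b). -/
import Mathlib


attribute [local instance] Classical.propDecidable

/-- A lattice-ordered monoid (ℓ-monoid): a lattice with least element `⊥` and greatest
element `⊤`, together with a monoid structure (multiplication `*`, unit `1`, playing the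
role of `e`) such that `⊥` (playing the role of the scalar `0`) is absorbing and
multiplication distributes over binary joins on both sides. -/
class LMonoid (L : Type*) extends Lattice L, BoundedOrder L, Monoid L where
  mul_bot : ∀ x : L, x * ⊥ = ⊥
  bot_mul : ∀ x : L, ⊥ * x = ⊥
  mul_sup : ∀ x y z : L, x * (y ⊔ z) = x * y ⊔ x * z
  sup_mul : ∀ x y z : L, (x ⊔ y) * z = x * z ⊔ y * z

/-- An integral ℓ-monoid: the unit of the multiplication is the top element of the lattice. -/
class IntegralLMonoid (L : Type*) extends LMonoid L where
  one_eq_top : (1 : L) = ⊤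

/-- Fuzzy regular expressions over an alphabet `X` with scalars in `L`. -/
inductive FRE (X L : Type*) where
  | zero : FRE X L
  | eps : FRE X L
  | char : X → FRE X L
  | smul : L → FRE X L → FRE X L
  | plus : FRE X L → FRE X L → FRE X L
  | comp : FRE X L → FRE X L → FRE X L
  | star : FRE X L → FRE X L

/-- The set of scalars of `L` occurring in a fuzzy regular expression. -/
def FRE.scalars {X L : Type*} : FRE X L → Set L
  | .zero => ∅
  | .eps => ∅
  | .char _ => ∅
  | .smul lam β => insert lam β.scalars
  | .plus β γ => β.scalars ∪ γ.scalars
  | .comp β γ => β.scalars ∪ γ.scalars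
  | .star β => β.scalars

noncomputable section

namespace Fz

variable {L : Type*} [IntegralLMonoid L]

/-- Composition of fuzzy relations: `(R ∘ S)(a,b) = ⋁_{c} R(a,c) ⊗ S(c,b)`. -/
def fcomp {A : Type*} [Fintype A] (R S : A → A → L) : A → A → L :=
  fun a b => Finset.univ.sup fun c => R a c * S c b

/-- Composition of a fuzzy relation with a fuzzy set: `(R ∘ f)(a) = ⋁_{b} R(a,b) ⊗ f(b)`. -/
def fcompf {A : Type*} [Fintype A] (R : A → A → L) (f : A → L) : A → L :=
  fun a => Finset.univ.sup fun b => R a b * f b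

/-- Composition of a fuzzy set with a fuzzy relation: `(f ∘ R)(a) = ⋁_{b} f(b) ⊗ R(b,a)`. -/
def fcompfR {A : Type*} [Fintype A] (f : A → L) (R : A → A → L) : A → L :=
  fun a => Finset.univ.sup fun b => f b * R b a

/-- Powers of a fuzzy relation: `R⁰` is the crisp equality and `R^{k+1} = R^k ∘ R`. -/
def rpow {A : Type*} [Fintype A] (R : A → A → L) : ℕ → A → A → L
  | 0 => fun a b => if a = b then 1 else ⊥
  | k + 1 => fcomp (rpow R k) R

private def dstarAux {A Z : Type*} [Fintype A] (δ : A → Z → A → L) : A → List Z → A → L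
  | a, [], b => if a = b then 1 else ⊥
  | a, z :: w, b => Finset.univ.sup fun c => dstarAux δ a w c * δ c z b

/-- The extension of a fuzzy transition relation to words:
`δ(a, ε, b) = 1` if `a = b` and `⊥` otherwise, and
`δ(a, ux, b) = ⋁_{c} δ(a, u, c) ⊗ δ(c, x, b)`. -/
def dstar {A Z : Type*} [Fintype A] (δ : A → Z → A → L) (a : A) (w : List Z) (b : A) : L :=
  dstarAux δ a w.reverse b

/-- Fuzzy language recognized by a fuzzy automaton with a single crisp initial state `a0`:
`L(A)(u) = ⋁_{b} δ(a0, u, b) ⊗ τ(b)`. -/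
def lang {A Z : Type*} [Fintype A] (δ : A → Z → A → L) (a0 : A) (τ : A → L)
    (w : List Z) : L :=
  Finset.univ.sup fun b => dstar δ a0 w b * τ b

/-- Concatenation of fuzzy languages: `(fg)(u) = ⋁_{u = vw} f(v) ⊗ g(w)`
(a finite join over the factorizations of `u`). -/
def fconcat {X : Type*} (f g : List X → L) : List X → L :=
  fun u => (Finset.range (u.length + 1)).sup fun i => f (u.take i) * g (u.drop i)

/-- Powers of a fuzzy language: `f⁰` is the characteristic function of the empty word,
and `f^{n+1} = fⁿ f`. -/
def fpow {X : Type*} (f : List X → L) : ℕ → List X → L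
  | 0 => fun u => if u = [] then 1 else ⊥
  | n + 1 => fconcat (fpow f n) f

/-- `IsNorm α f` asserts that `f` is the fuzzy language `‖α‖` represented by the fuzzy
regular expression `α` (for the star, `‖β*‖(u)` is the least upper bound of the powers,
which is required to exist). -/
inductive IsNorm {X : Type*} : FRE X L → (List X → L) → Prop
  | zero : IsNorm .zero fun _ => ⊥
  | eps : IsNorm .eps fun u => if u = [] then 1 else ⊥
  | char (x : X) : IsNorm (.char x) fun u => if u = [x] then 1 else ⊥
  | smul (lam : L) {β : FRE X L} {f : List X → L} :
      IsNorm β f → IsNorm (.smul lam β) fun u => lam * f u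
  | plus {β γ : FRE X L} {f g : List X → L} :
      IsNorm β f → IsNorm γ g → IsNorm (.plus β γ) fun u => f u ⊔ g u
  | comp {β γ : FRE X L} {f g : List X → L} :
      IsNorm β f → IsNorm γ g → IsNorm (.comp β γ) (fconcat f g)
  | star {β : FRE X L} {f g : List X → L} :
      IsNorm β f → (∀ u, IsLUB {l | ∃ n : ℕ, l = fpow f n u} (g u)) →
      IsNorm (.star β) g

/-- The ordinary regular expression `α_R` over `X ∪ Y` obtained from a fuzzy regular
expression `α` by replacing each scalar `λ` by the associated letter `λ' = sc λ ∈ Y`. -/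
def toReg {X Y : Type*} (sc : L → Y) : FRE X L → RegularExpression (X ⊕ Y)
  | .zero => 0
  | .eps => 1
  | .char x => RegularExpression.char (Sum.inl x)
  | .smul lam β => RegularExpression.char (Sum.inr (sc lam)) * toReg sc β
  | .plus β γ => toReg sc β + toReg sc γ
  | .comp β γ => toReg sc β * toReg sc γ
  | .star β => (toReg sc β).star

/-- `U_Y(u)`: the set of words over `X ∪ Y` from which deleting all letters of `Y`
yields `u` (the shuffle of `u` with `Y*`). -/
def UY {X : Type*} (Y : Type*) (u : List X) : Set (List (X ⊕ Y)) :=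
  {v | v.filterMap (fun z => z.getLeft?) = u}

/-- The homomorphism `φ*_α : (X ∪ Y)* → (L, ⊗, 1)` determined by mapping every letter of
`X` to `1` and every letter `λ' ∈ Y` to the corresponding scalar `λ = φY λ'`. -/
def phiStar {X Y : Type*} (φY : Y → L) (v : List (X ⊕ Y)) : L :=
  (v.map (Sum.elim (fun _ => (1 : L)) φY)).prod

/-- The language `‖α_R‖` of the regular expression `α_R`, viewed as a fuzzy language
with membership values in `{0, 1} ⊆ L`. -/
def langR {X Y : Type*} (sc : L → Y) (α : FRE X L) (v : List (X ⊕ Y)) : L :=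
  if v ∈ (toReg sc α).matches' then 1 else ⊥

/-- The reflexive fuzzy relation `R` on the state set of a nondeterministic automaton over
`X ∪ Y`: `R(a,a) = 1` and, for `a ≠ b`, `R(a,b) = ⋁_{λ' ∈ Y} λ ⊗ δ(a, λ', b)`. -/
def Rstep {X Y A : Type*} [Fintype A] [Fintype Y] (φY : Y → L)
    (δ : A → X ⊕ Y → A → L) : A → A → L :=
  fun a b => if a = b then 1 else Finset.univ.sup fun y : Y => φY y * δ a (Sum.inr y) b

/-- The fuzzy relation `R_A = Rⁿ`, `n = |A|`: the least transitive fuzzy relation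
containing `R`. -/
def RA {X Y A : Type*} [Fintype A] [Fintype Y] (φY : Y → L)
    (δ : A → X ⊕ Y → A → L) : A → A → L :=
  rpow (Rstep φY δ) (Fintype.card A)

/-- The set `{φ*_α(v) ⊗ δ^A(a,v,b) : v ∈ U_Y(x)}` whose least upper bound defines the
transition `δ^{A_α}(a, x, b)` of the fuzzy automaton associated with `A` and `α`. -/
def dset {X Y A : Type*} [Fintype A] (φY : Y → L) (δ : A → X ⊕ Y → A → L)
    (a : A) (x : X) (b : A) : Set L :=
  {l | ∃ v ∈ UY Y [x], l = phiStar φY v * dstar δ a v b}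

/-- The set `{⋁_{b} φ*_α(v) ⊗ δ^A(a,v,b) ⊗ τ(b) : v ∈ Y*}` whose least upper bound defines
the terminal degree `τ^{A_α}(a)` of the fuzzy automaton associated with `A` and `α`. -/
def tset {X Y A : Type*} [Fintype A] (φY : Y → L) (δ : A → X ⊕ Y → A → L)
    (τ : A → L) (a : A) : Set L :=
  {l | ∃ w : List Y, l = Finset.univ.sup fun b =>
    phiStar φY ((w.map Sum.inr : List (X ⊕ Y))) *
      dstar δ a (w.map Sum.inr) b * τ b}

end Fz

end

noncomputable section Aux

namespace Fz

variable {L : Type*} [IntegralLMonoid L]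

private lemma le_one' (x : L) : x ≤ 1 := by
  rw [IntegralLMonoid.one_eq_top]; exact le_top

private lemma lmul_mono {a b c d : L} (h1 : a ≤ b) (h2 : c ≤ d) : a * c ≤ b * d := by
  calc a * c ≤ a * c ⊔ a * d := le_sup_left
    _ = a * d := by rw [← LMonoid.mul_sup, sup_eq_right.mpr h2]
    _ ≤ a * d ⊔ b * d := le_sup_left
    _ = b * d := by rw [← LMonoid.sup_mul, sup_eq_right.mpr h1]

private lemma fsup_mul {A : Type*} (s : Finset A) (f : A → L) (m : L) :
    s.sup f * m = s.sup fun i => f i * m := by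
  induction s using Finset.cons_induction with
  | empty => simp [LMonoid.bot_mul]
  | cons a s ha ih => simp [Finset.sup_cons, LMonoid.sup_mul, ih]

private lemma mul_fsup {A : Type*} (s : Finset A) (f : A → L) (m : L) :
    m * s.sup f = s.sup fun i => m * f i := by
  induction s using Finset.cons_induction with
  | empty => simp [LMonoid.mul_bot]
  | cons a s ha ih => simp [Finset.sup_cons, LMonoid.mul_sup, ih]

private lemma crisp_sup {A : Type*} (s : Finset A) (f : A → L)
    (h : ∀ i, f i = 1 ∨ f i = ⊥) : s.sup f = 1 ∨ s.sup f = ⊥ := by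
  by_cases hx : ∃ i ∈ s, f i = 1
  · left
    obtain ⟨i, hi, h1⟩ := hx
    exact le_antisymm (le_one' _) (h1 ▸ Finset.le_sup hi)
  · right
    rw [← le_bot_iff]
    refine Finset.sup_le fun i hi => ?_
    rcases h i with h1 | h0
    · exact absurd ⟨i, hi, h1⟩ hx
    · simp [h0]

/-! ### dstar lemmas -/

private lemma dstar_nil {A Z : Type*} [Fintype A] (δ : A → Z → A → L) (a b : A) :
    dstar δ a [] b = if a = b then 1 else ⊥ := rfl

private lemma dstar_snoc {A Z : Type*} [Fintype A] (δ : A → Z → A → L) (a : A)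
    (w : List Z) (z : Z) (b : A) :
    dstar δ a (w ++ [z]) b = Finset.univ.sup fun c => dstar δ a w c * δ c z b := by
  simp only [dstar, List.reverse_append, List.reverse_singleton, List.singleton_append]
  rfl

private lemma dstar_crisp {A Z : Type*} [Fintype A] (δ : A → Z → A → L)
    (hδ : ∀ a z b, δ a z b = 1 ∨ δ a z b = ⊥) (a : A) (w : List Z) (b : A) :
    dstar δ a w b = 1 ∨ dstar δ a w b = ⊥ := by
  rw [dstar]
  generalize w.reverse = v
  induction v generalizing b with
  | nil =>
      by_cases h : a = b <;> simp [dstarAux, h]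
  | cons z v ih =>
      refine crisp_sup _ _ fun c => ?_
      rcases ih c with h1 | h0
      · rcases hδ c z b with h1' | h0'
        · left; rw [h1, h1', one_mul]
        · right; rw [h0', LMonoid.mul_bot]
      · right; rw [h0, LMonoid.bot_mul]

/-! ### phiStar lemmas -/

private lemma phiStar_nil {X Y : Type*} (φY : Y → L) :
    phiStar (X := X) φY [] = 1 := rfl

private lemma phiStar_snoc {X Y : Type*} (φY : Y → L) (w : List Y) (y : Y) :
    phiStar (X := X) φY ((w ++ [y]).map Sum.inr) =
      phiStar (X := X) φY (w.map Sum.inr) * φY y := by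
  simp [phiStar]

/-! ### path products -/

private def pprod {A : Type*} (R : A → A → L) (p : ℕ → A) : ℕ → L
  | 0 => 1
  | k + 1 => pprod R p k * R (p k) (p (k + 1))

private lemma pprod_congr {A : Type*} (R : A → A → L) {p q : ℕ → A} {k : ℕ}
    (h : ∀ t ≤ k, p t = q t) : pprod R p k = pprod R q k := by
  induction k with
  | zero => rfl
  | succ k ih =>
      rw [pprod, pprod, ih fun t ht => h t (ht.trans (Nat.le_succ k)),
        h k (Nat.le_succ k), h (k + 1) le_rfl]

private lemma pprod_add {A : Type*} (R : A → A → L) (p : ℕ → A) (s t : ℕ) :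
    pprod R p (s + t) = pprod R p s * pprod R (fun i => p (i + s)) t := by
  induction t with
  | zero => simp [pprod]
  | succ t ih =>
      show pprod R p ((s + t) + 1) = pprod R p s * pprod R (fun i => p (i + s)) (t + 1)
      rw [pprod, ih, pprod, mul_assoc]
      congr 2
      have e2 : s + t + 1 = t + 1 + s := by omega
      have e1 : s + t = t + s := Nat.add_comm s t
      rw [e2, e1]

private lemma pprod_le_rpow {A : Type*} [Fintype A] (R : A → A → L) (p : ℕ → A)
    (a : A) (k : ℕ) : ∀ b, p 0 = a → p k = b → pprod R p k ≤ rpow R k a b := by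
  induction k with
  | zero =>
      intro b h0 hk
      show (1 : L) ≤ if a = b then 1 else ⊥
      rw [if_pos (h0.symm.trans hk)]
  | succ k ih =>
      intro b h0 hk
      rw [pprod]
      calc pprod R p k * R (p k) (p (k + 1)) ≤ rpow R k a (p k) * R (p k) b :=
            lmul_mono (ih (p k) h0 rfl) (by rw [hk])
        _ ≤ rpow R (k + 1) a b := Finset.le_sup (f := fun c => rpow R k a c * R c b)
            (Finset.mem_univ (p k))

private lemma rpow_mul_le {A : Type*} [Fintype A] (R : A → A → L) (a : A) (k : ℕ) :
    ∀ b m u, (∀ p : ℕ → A, p 0 = a → p k = b → pprod R p k * m ≤ u) →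
      rpow R k a b * m ≤ u := by
  induction k with
  | zero =>
      intro b m u h
      by_cases hab : a = b
      · subst hab
        have := h (fun _ => a) rfl rfl
        rw [pprod] at this
        show (if a = a then (1 : L) else ⊥) * m ≤ u
        rw [if_pos rfl]
        exact this
      · show (if a = b then (1 : L) else ⊥) * m ≤ u
        rw [if_neg hab, LMonoid.bot_mul]
        exact bot_le
  | succ k ih =>
      intro b m u h
      show (Finset.univ.sup fun c => rpow R k a c * R c b) * m ≤ u
      rw [fsup_mul]
      refine Finset.sup_le fun c _ => ?_
      rw [mul_assoc]
      refine ih c (R c b * m) u fun p h0 hk => ?_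
      have key := h (fun t => if t = k + 1 then b else p t)
        (by simp [h0]) (by simp)
      rw [pprod] at key
      have e1 : pprod R (fun t => if t = k + 1 then b else p t) k = pprod R p k := by
        refine pprod_congr R fun t ht => ?_
        simp only [if_neg (by omega : ¬ t = k + 1)]
      simp only [e1, if_neg (by omega : ¬ k = k + 1), if_pos rfl, hk] at key
      rw [← mul_assoc]
      exact key

private lemma rpow_le_succ {A : Type*} [Fintype A] (R : A → A → L)
    (hrefl : ∀ a, R a a = 1) (k : ℕ) (a b : A) :
    rpow R k a b ≤ rpow R (k + 1) a b :=
  calc rpow R k a b = rpow R k a b * R b b := by rw [hrefl, mul_one]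
    _ ≤ rpow R (k + 1) a b :=
        Finset.le_sup (f := fun c => rpow R k a c * R c b) (Finset.mem_univ b)

private lemma rpow_mono {A : Type*} [Fintype A] (R : A → A → L)
    (hrefl : ∀ a, R a a = 1) {k m : ℕ} (h : k ≤ m) (a b : A) :
    rpow R k a b ≤ rpow R m a b := by
  induction h with
  | refl => exact le_rfl
  | step h ih => exact ih.trans (rpow_le_succ R hrefl _ a b)

private lemma rpow_card_succ_le {A : Type*} [Fintype A] (R : A → A → L)
    (hrefl : ∀ a, R a a = 1) (a b : A) :
    rpow R (Fintype.card A + 1) a b ≤ rpow R (Fintype.card A) a b := by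
  set n := Fintype.card A with hn
  have main := rpow_mul_le R a (n + 1) b 1 (rpow R n a b) ?_
  · rwa [mul_one] at main
  intro p h0 hk
  rw [mul_one]
  obtain ⟨i, j, hij, hjle, hpe⟩ :
      ∃ i j : ℕ, i < j ∧ j ≤ n + 1 ∧ p i = p j := by
    obtain ⟨i0, j0, hne, he⟩ := Fintype.exists_ne_map_eq_of_card_lt
      (fun t : Fin (n + 2) => p t) (by simp [hn])
    rcases lt_or_gt_of_ne hne with hl | hg
    · exact ⟨i0, j0, hl, Nat.lt_succ_iff.mp j0.isLt, he⟩
    · exact ⟨j0, i0, hg, Nat.lt_succ_iff.mp i0.isLt, he.symm⟩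
  set d := j - i with hd
  set k' := n + 1 - d with hk'
  set r := n + 1 - j with hr
  set q : ℕ → A := fun t => if t < i then p t else p (t + d) with hq
  have hq0 : q 0 = a := by
    by_cases h0i : 0 < i
    · simp only [hq, if_pos h0i]; exact h0
    · have hi0 : i = 0 := by omega
      simp only [hq, if_neg (by omega : ¬ (0:ℕ) < i)]
      have e : (0 : ℕ) + d = j := by omega
      rw [e, ← hpe, hi0]
      exact h0
  have hqk : q k' = b := by
    simp only [hq, if_neg (by omega : ¬ k' < i)]
    have e : k' + d = n + 1 := by omega
    rw [e]
    exact hk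
  have hsplit1 : pprod R p (n + 1) =
      pprod R p i * (pprod R (fun t => p (t + i)) d *
        pprod R (fun t => p (t + d + i)) r) := by
    have e : n + 1 = i + (d + r) := by omega
    rw [e, pprod_add, pprod_add]
  have hsplit2 : pprod R q k' =
      pprod R p i * pprod R (fun t => p (t + d + i)) r := by
    have e : k' = i + r := by omega
    rw [e, pprod_add]
    congr 1
    · refine pprod_congr R fun t ht => ?_
      rcases Nat.lt_or_ge t i with htl | hte
      · simp only [hq, if_pos htl]
      · have hti : t = i := by omega
        subst hti
        simp only [hq, if_neg (lt_irrefl t)]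
        have e2 : t + d = j := by omega
        rw [e2, ← hpe]
    · refine pprod_congr R fun t ht => ?_
      simp only [hq, if_neg (by omega : ¬ t + i < i)]
      congr 1
      omega
  calc pprod R p (n + 1)
      = pprod R p i * (pprod R (fun t => p (t + i)) d *
          pprod R (fun t => p (t + d + i)) r) := hsplit1
    _ ≤ pprod R p i * (1 * pprod R (fun t => p (t + d + i)) r) :=
        lmul_mono le_rfl (lmul_mono (le_one' _) le_rfl)
    _ = pprod R q k' := by rw [one_mul, ← hsplit2]
    _ ≤ rpow R k' a b := pprod_le_rpow R q a k' b hq0 hqk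
    _ ≤ rpow R n a b := rpow_mono R hrefl (by omega) a b

private lemma rpow_le_card {A : Type*} [Fintype A] (R : A → A → L)
    (hrefl : ∀ a, R a a = 1) (k : ℕ) (a b : A) :
    rpow R k a b ≤ rpow R (Fintype.card A) a b := by
  induction k generalizing b with
  | zero => exact rpow_mono R hrefl (Nat.zero_le _) a b
  | succ m ih =>
      rcases le_or_gt (m + 1) (Fintype.card A) with h | h
      · exact rpow_mono R hrefl h a b
      · calc rpow R (m + 1) a b
            = Finset.univ.sup (fun c => rpow R m a c * R c b) := rfl
          _ ≤ Finset.univ.sup (fun c => rpow R (Fintype.card A) a c * R c b) :=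
              Finset.sup_mono_fun fun c _ => lmul_mono (ih c) le_rfl
          _ = rpow R (Fintype.card A + 1) a b := rfl
          _ ≤ rpow R (Fintype.card A) a b := rpow_card_succ_le R hrefl a b

private lemma el_le_rpow {X Y A : Type*} [Fintype A] [Fintype Y] (φY : Y → L)
    (δ : A → X ⊕ Y → A → L) (hδ : ∀ a z b, δ a z b = 1 ∨ δ a z b = ⊥) (a : A)
    (w : List Y) :
    ∀ b : A, phiStar (X := X) φY (w.map Sum.inr) * dstar δ a (w.map Sum.inr) b ≤
        rpow (Rstep φY δ) w.length a b := by
  induction w using List.reverseRecOn with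
  | nil =>
      intro b
      rw [List.map_nil, phiStar_nil, one_mul, dstar_nil]
      exact le_rfl
  | append_singleton w y ih =>
      intro b
      rw [phiStar_snoc φY w y]
      have emap : (w ++ [y]).map (Sum.inr : Y → X ⊕ Y) = w.map Sum.inr ++ [Sum.inr y] := by
        simp
      have elen : (w ++ [y]).length = w.length + 1 := by simp
      rw [emap, elen, dstar_snoc, mul_fsup]
      refine Finset.sup_le fun c _ => ?_
      rcases dstar_crisp δ hδ a (w.map Sum.inr) c with h1 | h0
      swap
      · rw [h0, LMonoid.bot_mul, LMonoid.mul_bot]; exact bot_le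
      have hΦ : phiStar (X := X) φY (w.map Sum.inr) ≤ rpow (Rstep φY δ) w.length a c := by
        have := ih c
        rwa [h1, mul_one] at this
      have h2 : φY y * δ c (Sum.inr y) b ≤ Rstep φY δ c b := by
        by_cases hcb : c = b
        · simp only [Rstep, if_pos hcb]
          exact le_one' _
        · simp only [Rstep, if_neg hcb]
          exact Finset.le_sup (f := fun y' : Y => φY y' * δ c (Sum.inr y') b)
            (Finset.mem_univ y)
      rw [h1, one_mul]
      calc phiStar (X := X) φY (w.map Sum.inr) * φY y * δ c (Sum.inr y) b
          = phiStar (X := X) φY (w.map Sum.inr) * (φY y * δ c (Sum.inr y) b) :=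
            mul_assoc _ _ _
        _ ≤ rpow (Rstep φY δ) w.length a c * Rstep φY δ c b := lmul_mono hΦ h2
        _ ≤ rpow (Rstep φY δ) (w.length + 1) a b :=
            Finset.le_sup (f := fun c' => rpow (Rstep φY δ) w.length a c' * Rstep φY δ c' b)
              (Finset.mem_univ c)

private lemma rpow_le_ub {X Y A : Type*} [Fintype A] [Fintype Y] (φY : Y → L)
    (δ : A → X ⊕ Y → A → L) (hδ : ∀ a z b, δ a z b = 1 ∨ δ a z b = ⊥) (a : A) (k : ℕ) :
    ∀ (b : A) (m u : L),
      (∀ w : List Y,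
        phiStar (X := X) φY (w.map Sum.inr) * dstar δ a (w.map Sum.inr) b * m ≤ u) →
      rpow (Rstep φY δ) k a b * m ≤ u := by
  induction k with
  | zero =>
      intro b m u h
      by_cases hab : a = b
      · subst hab
        have key := h []
        rw [List.map_nil, phiStar_nil, dstar_nil, if_pos rfl, one_mul, one_mul] at key
        show (if a = a then (1 : L) else ⊥) * m ≤ u
        rwa [if_pos rfl, one_mul]
      · show (if a = b then (1 : L) else ⊥) * m ≤ u
        rw [if_neg hab, LMonoid.bot_mul]
        exact bot_le
  | succ k ih =>
      intro b m u h
      show (Finset.univ.sup fun c => rpow (Rstep φY δ) k a c * Rstep φY δ c b) * m ≤ u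
      rw [fsup_mul]
      refine Finset.sup_le fun c _ => ?_
      rw [mul_assoc]
      refine ih c (Rstep φY δ c b * m) u fun w => ?_
      rcases dstar_crisp δ hδ a (w.map Sum.inr) c with h1 | h0
      swap
      · rw [h0, LMonoid.mul_bot, LMonoid.bot_mul]
        exact bot_le
      rw [h1, mul_one]
      by_cases hcb : c = b
      · subst hcb
        have key := h w
        rw [h1, mul_one] at key
        have hR : Rstep φY δ c c = 1 := by
          unfold Rstep
          exact if_pos rfl
        rw [hR, one_mul]
        exact key
      · simp only [Rstep, if_neg hcb]
        rw [fsup_mul, mul_fsup]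
        refine Finset.sup_le fun y _ => ?_
        rcases hδ c (Sum.inr y) b with hδ1 | hδ0
        swap
        · rw [hδ0, LMonoid.mul_bot, LMonoid.bot_mul, LMonoid.mul_bot]
          exact bot_le
        rw [hδ1, mul_one]
        have hD : dstar δ a ((w ++ [y]).map Sum.inr) b = 1 := by
          simp only [List.map_append, List.map_cons, List.map_nil]
          rw [dstar_snoc]
          refine le_antisymm (le_one' _) ?_
          calc (1 : L) = dstar δ a (w.map Sum.inr) c * δ c (Sum.inr y) b := by
                rw [h1, hδ1, one_mul]
            _ ≤ _ := Finset.le_sup (f := fun c' => dstar δ a (w.map Sum.inr) c' *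
                δ c' (Sum.inr y) b) (Finset.mem_univ c)
        have key := h (w ++ [y])
        rw [hD, mul_one, phiStar_snoc φY w y, mul_assoc] at key
        exact key

end Fz

end Aux

open Fz in
/-- **Theorem 3 of the paper.** Let `L` be an integral ℓ-monoid, `α` a fuzzy
regular expression over a finite alphabet `X` with associated alphabet `Y`, and
`A = (A, X∪Y, δ, a₀, τ)` an arbitrary nondeterministic finite automaton recognizing
`‖α_R‖`.  Then for all states `a, b`, the set `{φ*_α(u) ⊗ δ(a,u,b) : u ∈ Y*}` has a least
upper bound in `L` and `R_A(a,b) = ⋁_{u ∈ Y*} φ*_α(u) ⊗ δ(a,u,b)`. -/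
theorem stmt9 {L X Y A : Type*} [IntegralLMonoid L] [Fintype X] [Fintype Y] [Fintype A]
    (α : FRE X L) (sc : L → Y) (φY : Y → L)
    (hsc : Set.BijOn sc α.scalars (Set.univ : Set Y))
    (hφY : ∀ l ∈ α.scalars, φY (sc l) = l)
    (δ : A → X ⊕ Y → A → L) (a0 : A) (τ : A → L)
    (hδ : ∀ a z b, δ a z b = 1 ∨ δ a z b = ⊥)
    (hτ : ∀ a, τ a = 1 ∨ τ a = ⊥)
    (hrec : ∀ v : List (X ⊕ Y), lang δ a0 τ v = langR sc α v) :
    ∀ a b : A,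
      IsLUB {l | ∃ w : List Y,
          l = phiStar φY ((w.map Sum.inr : List (X ⊕ Y))) * dstar δ a (w.map Sum.inr) b}
        (RA φY δ a b) := by
  intro a b
  constructor
  · rintro l ⟨w, rfl⟩
    calc phiStar φY ((w.map Sum.inr : List (X ⊕ Y))) * dstar δ a (w.map Sum.inr) b
        ≤ rpow (Rstep φY δ) w.length a b := Fz.el_le_rpow φY δ hδ a w b
      _ ≤ rpow (Rstep φY δ) (Fintype.card A) a b :=
          Fz.rpow_le_card (Rstep φY δ)
            (fun c => by unfold Rstep; exact if_pos rfl) w.length a b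
  · intro u hu
    have key := Fz.rpow_le_ub φY δ hδ a (Fintype.card A) b 1 u fun w => by
      rw [mul_one]
      exact hu ⟨w, rfl⟩
    rwa [mul_one] at key
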